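/- Let 𝔤 ≥ 2 and let Λ = Λ₁ ∪ … ∪ Λ𝔤 ⊂ ℤ² be a finite set partitioned into generations equipped with a family structure (spouse sp, children c₁, c₂, parents p₁, p₂, sibling sib). Suppose b = (b₁, …, b_𝔤) : ℝ → ℂ^𝔤 is a solution of the toy model, and define β_j(t) := b_k(t) for every j ∈ Λₖ and every k = 1, …, 𝔤. Then β solves the family system: for every j ∈ Λₖ, i β̇_j = −β_j |β_j|² + 2 β_{c₁(j)} β_{c₂(j)} conj(β_{sp(j)}) + 2 β_{p₁(j)} β_{p₂(j)} conj(β_{sib(j)}), where the children/spouse term is interpreted as 0 for k = 𝔤 and the parents/sibling term as 0 for k = 1. In particular, the subspace of ℂ^Λ consisting of vectors that are constant on each generation is invariant under the flow of the family system. -/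
import Mathlib


/-! Solutions of the toy model, extended as generation-constant functions, solve the
family system on `Λ` (Corollary `coro:Invariant`). -/

open Complex

/-- A family structure (spouse, children, sibling, parents) on `Λ = Λ₁ ∪ … ∪ Λ_g`. -/
structure FamilyMaps (g : ℕ) (Λ : ℕ → Finset (ℤ × ℤ)) where
  sp : ℤ × ℤ → ℤ × ℤ
  c1 : ℤ × ℤ → ℤ × ℤ
  c2 : ℤ × ℤ → ℤ × ℤ
  sib : ℤ × ℤ → ℤ × ℤ
  p1 : ℤ × ℤ → ℤ × ℤ
  p2 : ℤ × ℤ → ℤ × ℤ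
  sp_mem : ∀ k, 1 ≤ k → k < g → ∀ j ∈ Λ k, sp j ∈ Λ k
  c1_mem : ∀ k, 1 ≤ k → k < g → ∀ j ∈ Λ k, c1 j ∈ Λ (k + 1)
  c2_mem : ∀ k, 1 ≤ k → k < g → ∀ j ∈ Λ k, c2 j ∈ Λ (k + 1)
  sib_mem : ∀ k, 1 < k → k ≤ g → ∀ j ∈ Λ k, sib j ∈ Λ k
  p1_mem : ∀ k, 1 < k → k ≤ g → ∀ j ∈ Λ k, p1 j ∈ Λ (k - 1)
  p2_mem : ∀ k, 1 < k → k ≤ g → ∀ j ∈ Λ k, p2 j ∈ Λ (k - 1)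

/-- `b : ℝ → ℕ → ℂ` solves the toy model
`i b_k' = -b_k² conj b_k + 2 conj b_k (b_{k-1}² + b_{k+1}²)`, `1 ≤ k ≤ g`,
with the convention `b₀ ≡ 0`, `b_{g+1} ≡ 0`. -/
def IsToyModelSolution (g : ℕ) (b : ℝ → ℕ → ℂ) : Prop :=
  (∀ t, b t 0 = 0) ∧ (∀ t, b t (g + 1) = 0) ∧
  ∀ k, 1 ≤ k → k ≤ g → ∀ t : ℝ,
    HasDerivAt (fun s => b s k)
      (-Complex.I * (-(b t k) ^ 2 * (starRingEnd ℂ) (b t k)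
        + 2 * (starRingEnd ℂ) (b t k) * ((b t (k - 1)) ^ 2 + (b t (k + 1)) ^ 2))) t

/-- `β` solves the family system: for `j` in generation `k`,
`i β̇_j = -β_j² conj β_j + 2 β_{c₁ j} β_{c₂ j} conj β_{sp j} + 2 β_{p₁ j} β_{p₂ j} conj β_{sib j}`,
with the children/spouse term absent for `k = g` and the parents/sibling term absent
for `k = 1`. -/
def SolvesFamilySystem (g : ℕ) (Λ : ℕ → Finset (ℤ × ℤ)) (F : FamilyMaps g Λ)
    (β : ℝ → ℤ × ℤ → ℂ) : Prop :=
  ∀ k, 1 ≤ k → k ≤ g → ∀ j ∈ Λ k, ∀ t : ℝ,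
    HasDerivAt (fun s => β s j)
      (-Complex.I * (-(β t j) ^ 2 * (starRingEnd ℂ) (β t j)
        + (if k < g then
            2 * β t (F.c1 j) * β t (F.c2 j) * (starRingEnd ℂ) (β t (F.sp j)) else 0)
        + (if 1 < k then
            2 * β t (F.p1 j) * β t (F.p2 j) * (starRingEnd ℂ) (β t (F.sib j)) else 0))) t

/-- Corollary `coro:Invariant`: a toy-model solution, extended to be constant on each
generation, solves the family system; in particular the generation-constant subspace is
invariant. -/
theorem toy_model_solves_family_system (g : ℕ) (hg : 2 ≤ g)
    (Λ : ℕ → Finset (ℤ × ℤ)) (F : FamilyMaps g Λ)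
    (b : ℝ → ℕ → ℂ) (hb : IsToyModelSolution g b)
    (β : ℝ → ℤ × ℤ → ℂ)
    (hβ : ∀ (t : ℝ) (k : ℕ) (j : ℤ × ℤ), 1 ≤ k → k ≤ g → j ∈ Λ k → β t j = b t k) :
    SolvesFamilySystem g Λ F β := by
  obtain ⟨h0, hgp1, hode⟩ := hb
  intro k hk1 hkg j hj t
  have hfun : (fun s => β s j) = fun s => b s k := by
    funext s; exact hβ s k j hk1 hkg hj
  rw [hfun, hβ t k j hk1 hkg hj]
  have key : (-Complex.I * (-(b t k) ^ 2 * (starRingEnd ℂ) (b t k)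
        + (if k < g then
            2 * β t (F.c1 j) * β t (F.c2 j) * (starRingEnd ℂ) (β t (F.sp j)) else 0)
        + (if 1 < k then
            2 * β t (F.p1 j) * β t (F.p2 j) * (starRingEnd ℂ) (β t (F.sib j)) else 0)))
      = (-Complex.I * (-(b t k) ^ 2 * (starRingEnd ℂ) (b t k)
        + 2 * (starRingEnd ℂ) (b t k) * ((b t (k - 1)) ^ 2 + (b t (k + 1)) ^ 2))) := by
    congr 1
    have hc : (if k < g then
            2 * β t (F.c1 j) * β t (F.c2 j) * (starRingEnd ℂ) (β t (F.sp j)) else 0)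
        = 2 * (starRingEnd ℂ) (b t k) * (b t (k + 1)) ^ 2 := by
      by_cases hk : k < g
      · rw [if_pos hk,
          hβ t (k+1) (F.c1 j) (by omega) (by omega) (F.c1_mem k hk1 hk j hj),
          hβ t (k+1) (F.c2 j) (by omega) (by omega) (F.c2_mem k hk1 hk j hj),
          hβ t k (F.sp j) hk1 hkg (F.sp_mem k hk1 hk j hj)]
        ring
      · rw [if_neg hk]
        have : k = g := by omega
        rw [this, hgp1 t]
        ring
    have hp : (if 1 < k then
            2 * β t (F.p1 j) * β t (F.p2 j) * (starRingEnd ℂ) (β t (F.sib j)) else 0)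
        = 2 * (starRingEnd ℂ) (b t k) * (b t (k - 1)) ^ 2 := by
      by_cases hk : 1 < k
      · rw [if_pos hk,
          hβ t (k-1) (F.p1 j) (by omega) (by omega) (F.p1_mem k hk hkg j hj),
          hβ t (k-1) (F.p2 j) (by omega) (by omega) (F.p2_mem k hk hkg j hj),
          hβ t k (F.sib j) hk1 hkg (F.sib_mem k hk hkg j hj)]
        ring
      · rw [if_neg hk]
        have : k = 1 := by omega
        rw [this]
        simp [h0 t]
    rw [hc, hp]; ring
  rw [key]
  exact hode k hk1 hkg t
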